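/- arXiv:1507.04885 — 2 statements merged into one kernel-verified Lean document; each statement's English description precedes it below -/
import Mathlib

section
/- If H=(B,S,E) is a simple path (the underlying graph is a path), with weights -1 on B and +1 on S and every vertex of B having at least one neighbor, then bg(H) ≤ 2. -/
/-!
List the path as `v₀, …, v_{N-1}`; since it is bipartite, the sold vertices are those of one
parity. Let every sold vertex trade places with its successor (if any). Then each sold vertex
comes after both of its neighbours, and the weights read in the new order are `(bought, sold)`
pairs, possibly preceded by a single bought `v₀` and followed by a single unpaired vertex, so
no prefix has more than two bought vertices in excess of sold ones.
-/

open Finset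

variable {V : Type*}

/-- The value (#bought − #sold) of a prefix `p` of an ordering (±1 weights). -/
def prefixVal (bought : V → Prop) [DecidablePred bought] (p : List V) : ℤ :=
  (p.countP (fun v => decide (bought v)) : ℤ) -
    (p.countP (fun v => decide (¬ bought v)) : ℤ)

/-- The budget of an ordering: the maximum prefix value (at least 0, via the empty prefix). -/
def budgetOf (bought : V → Prop) [DecidablePred bought] (l : List V) : ℤ :=
  (l.inits.map (prefixVal bought)).foldr max 0

/-- A valid ordering of the vertex set `A`: a listing of exactly the vertices of `A`,
without repetition, such that every prefix containing a sold vertex `s` also contains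
every bought neighbour of `s` that belongs to `A`. -/
def ValidOrderOn (adj : V → V → Prop) (bought : V → Prop) (A : Finset V)
    (l : List V) : Prop :=
  l.Nodup ∧ (∀ v, v ∈ l ↔ v ∈ A) ∧
    ∀ p, p <+: l → ∀ s ∈ p, ¬ bought s → ∀ b ∈ A, bought b → adj b s → b ∈ p

/-- The optimal budget of the subgraph induced on the vertex set `A`. -/
noncomputable def bgOn (adj : V → V → Prop) (bought : V → Prop) [DecidablePred bought]
    (A : Finset V) : ℤ :=
  sInf { K : ℤ | ∃ l, ValidOrderOn adj bought A l ∧ budgetOf bought l ≤ K }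

/-- The optimal budget of the whole bipartite graph. -/
noncomputable def bg (adj : V → V → Prop) (bought : V → Prop)
    [Fintype V] [DecidablePred bought] : ℤ :=
  bgOn adj bought Finset.univ

/-- `N*(I)`: the sold vertices all of whose bought neighbours lie in `I`. -/
def nstar (adj : V → V → Prop) [DecidableRel adj] (bought : V → Prop)
    [DecidablePred bought] [Fintype V] [DecidableEq V] (I : Finset V) : Finset V :=
  Finset.univ.filter fun s => ¬ bought s ∧ ∀ b, bought b → adj b s → b ∈ I

section Budget

variable (bought : V → Prop) [DecidablePred bought]

lemma budgetOf_nonneg (l : List V) : 0 ≤ budgetOf bought l :=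
  List.le_max_of_le' 0 (List.mem_map_of_mem ((List.mem_inits _ _).2 List.nil_prefix))
    (by simp [prefixVal])

lemma budgetOf_le {l : List V} {K : ℤ} (hK : 0 ≤ K)
    (h : ∀ m, prefixVal bought (l.take m) ≤ K) : budgetOf bought l ≤ K := by
  have foldr_le : ∀ xs : List ℤ, (∀ x ∈ xs, x ≤ K) → xs.foldr max 0 ≤ K := by
    intro xs hxs
    induction xs <;> simp_all
  refine foldr_le _ fun x hx => ?_
  obtain ⟨p, hp, rfl⟩ := List.mem_map.1 hx
  rw [List.mem_inits, List.prefix_iff_eq_take] at hp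
  exact hp ▸ h _

lemma bgOn_le_of_validOrderOn {adj : V → V → Prop} {A : Finset V} {l : List V} {K : ℤ}
    (hl : ValidOrderOn adj bought A l) (hK : budgetOf bought l ≤ K) :
    bgOn adj bought A ≤ K :=
  csInf_le ⟨0, fun _ ⟨l', _, hl'⟩ => (budgetOf_nonneg bought l').trans hl'⟩ ⟨l, hl, hK⟩

end Budget

section Listing

lemma map_val_take_finRange (N m : ℕ) :
    ((List.finRange N).take m).map Fin.val = List.range (min m N) := by
  rw [List.map_take, List.map_coe_finRange_eq_range, List.take_range]

lemma mem_take_finRange {N m : ℕ} {j : Fin N} :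
    j ∈ (List.finRange N).take m ↔ (j : ℕ) < m := by
  rw [← List.mem_map_of_injective Fin.val_injective, map_val_take_finRange, List.mem_range]
  omega

variable {N : ℕ} (order : Fin N ≃ V)

lemma mem_take_map_finRange {m : ℕ} {v : V} :
    v ∈ ((List.finRange N).map order).take m ↔ (order.symm v : ℕ) < m := by
  rw [← List.map_take, ← order.apply_symm_apply v, List.mem_map_of_injective order.injective,
    order.symm_apply_apply, mem_take_finRange]

lemma validOrderOn_map_finRange [Fintype V] (adj : V → V → Prop) (bought : V → Prop)
    (h : ∀ s b, ¬ bought s → bought b → adj b s → (order.symm b : ℕ) < order.symm s) :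
    ValidOrderOn adj bought Finset.univ ((List.finRange N).map order) := by
  refine ⟨(List.nodup_finRange N).map order.injective, fun v => ?_, ?_⟩
  · simpa using ⟨order.symm v, order.apply_symm_apply v⟩
  intro p hp s hs hsold b _ hb hbs
  rw [List.prefix_iff_eq_take] at hp
  rw [hp, mem_take_map_finRange] at hs ⊢
  exact (h s b hsold hb hbs).trans hs

lemma prefixVal_take_map_finRange (bought : V → Prop) [DecidablePred bought]
    (Q : ℕ → Prop) [DecidablePred Q] (hQ : ∀ j, bought (order j) ↔ Q j) (m : ℕ) :
    prefixVal bought (((List.finRange N).map order).take m) =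
      2 * ((List.range (min m N)).countP (fun j => decide (Q j)) : ℤ) - min m N := by
  have hB : (fun v => decide (bought v)) ∘ order = (fun j => decide (Q j)) ∘ Fin.val :=
    funext fun j => by simp [hQ]
  have hS : (fun v => decide ¬ bought v) ∘ order = (fun j => decide ¬ Q j) ∘ Fin.val :=
    funext fun j => by simp [hQ]
  have hsplit :=
    List.length_eq_countP_add_countP (fun j => decide (Q j)) (l := List.range (min m N))
  simp only [List.length_range, Bool.not_eq_true, decide_eq_false_iff_not] at hsplit
  rw [← List.map_take, prefixVal, List.countP_map, List.countP_map, hB, hS, ← List.countP_map,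
    ← List.countP_map, map_val_take_finRange]
  omega

end Listing

section PairSwap

/-- With the sold vertices at positions of parity `e`, the new order lists path vertex
`pairSwap N e j` at position `j`. -/
def pairSwap (N e j : ℕ) : ℕ :=
  if j % 2 = e ∧ j + 1 < N then j + 1 else if j % 2 = e then j else j - 1

variable {N e : ℕ}

lemma pairSwap_lt {j : ℕ} (hj : j < N) : pairSwap N e j < N := by
  unfold pairSwap; split_ifs <;> omega

lemma pairSwap_pairSwap (he : e < 2) {j : ℕ} (hj : j < N) :
    pairSwap N e (pairSwap N e j) = j := by
  simp only [pairSwap]; split_ifs <;> omega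

lemma pairSwap_mod_two_ne_iff (he : e < 2) (j : ℕ) :
    pairSwap N e j % 2 ≠ e ↔ (j % 2 = e ∧ j + 1 < N) ∨ (j = 0 ∧ e = 1) := by
  simp only [pairSwap]; split_ifs <;> omega

lemma pairSwap_lt_pairSwap_of_adjacent {i j : ℕ} (hi : i % 2 = e) (hj : j < N)
    (hij : j + 1 = i ∨ i + 1 = j) : pairSwap N e j < pairSwap N e i := by
  simp only [pairSwap]; split_ifs <;> omega

lemma countP_pairSwap_mod_two_ne_le (he : e < 2) (m : ℕ) :
    (List.range m).countP (fun j => decide (pairSwap N e j % 2 ≠ e)) ≤ (m + 1 + e) / 2 := by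
  induction m with
  | zero => simp
  | succ m ih =>
    rw [List.range_succ, List.countP_append, List.countP_singleton]
    have hm := pairSwap_mod_two_ne_iff (N := N) he m
    have hlen := List.countP_le_length (p := fun j => decide (pairSwap N e j % 2 ≠ e))
      (l := List.range m)
    rw [List.length_range] at hlen
    split_ifs with h <;> rw [decide_eq_true_eq] at h <;> omega

def pairSwapPerm (N e : ℕ) (he : e < 2) : Equiv.Perm (Fin N) :=
  Function.Involutive.toPerm (fun j => ⟨pairSwap N e j, pairSwap_lt j.2⟩)
    fun j => Fin.ext (pairSwap_pairSwap he j.2)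

end PairSwap

lemma exists_parity_of_alternating {N : ℕ} (P : Fin N → Prop)
    (h : ∀ i j : Fin N, (i : ℕ) + 1 = j → (P j ↔ ¬ P i)) :
    ∃ e < 2, ∀ i : Fin N, P i ↔ (i : ℕ) % 2 ≠ e := by
  classical
  cases N with
  | zero => exact ⟨0, by norm_num, fun i => i.elim0⟩
  | succ n =>
    refine ⟨if P 0 then 1 else 0, by split_ifs <;> norm_num, fun i => ?_⟩
    induction i using Fin.induction with
    | zero => split_ifs with h0 <;> simp [h0]
    | succ i ih =>
      rw [h i.castSucc i.succ (by simp), ih]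
      simp only [Fin.val_succ, Fin.val_castSucc]
      split_ifs <;> omega

theorem path_budget_general {V : Type*} [Fintype V]
    (G : SimpleGraph V) (bought : V → Prop) [DecidablePred bought]
    (hbip : ∀ v w, G.Adj v w → (bought v ↔ ¬ bought w))
    (hpath : ∃ (n : ℕ) (f : V ≃ Fin n), ∀ v w,
      G.Adj v w ↔ ((f v : ℕ) + 1 = (f w : ℕ) ∨ (f w : ℕ) + 1 = (f v : ℕ))) :
    bg G.Adj bought ≤ 2 := by
  obtain ⟨N, f, hadj⟩ := hpath
  obtain ⟨e, he, hparity⟩ := exists_parity_of_alternating (fun i => bought (f.symm i))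
    fun i j hij => hbip _ _ ((hadj _ _).2 (by simp [hij]))
  let order := (pairSwapPerm N e he).trans f.symm
  refine bgOn_le_of_validOrderOn bought (validOrderOn_map_finRange order G.Adj bought ?_)
    (budgetOf_le bought (by norm_num) fun m => ?_)
  · intro s b hs hb hbs
    have hs_parity : (f s : ℕ) % 2 = e := by
      by_contra hne
      exact hs (by simpa using (hparity (f s)).2 hne)
    exact pairSwap_lt_pairSwap_of_adjacent hs_parity (f b).2 ((hadj b s).1 hbs)
  · rw [prefixVal_take_map_finRange order bought (fun j => pairSwap N e j % 2 ≠ e)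
      fun j => hparity _]
    have := countP_pairSwap_mod_two_ne_le (N := N) he (min m N)
    omega

/-- if the underlying graph is a simple path (bipartitioned by `bought`,
every bought vertex having a sold neighbour) then `bg(H) ≤ 2`. -/
theorem path_budget {V : Type*} [Fintype V] [DecidableEq V]
    (G : SimpleGraph V) (bought : V → Prop) [DecidablePred bought]
    (hbip : ∀ v w, G.Adj v w → (bought v ↔ ¬ bought w))
    (hpath : ∃ (n : ℕ) (f : V ≃ Fin n), ∀ v w,
      G.Adj v w ↔ ((f v : ℕ) + 1 = (f w : ℕ) ∨ (f w : ℕ) + 1 = (f v : ℕ)))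
    (hBnbr : ∀ b, bought b → ∃ s, ¬ bought s ∧ G.Adj b s) :
    bg G.Adj bought ≤ 2 :=
  path_budget_general G bought hbip hpath
end

section
/- If H=(B,S,E) is a simple even cycle, with weights -1 on B and +1 on S, then bg(H) = 2. -/
open Finset

variable {V : Type*}

/-! The first sold vertex of a valid ordering is preceded only by bought vertices, among them its
two distinct neighbours on the cycle, so some prefix has value at least 2. Conversely, numbering
the cycle `0, 1, …, 2n-1` with the bought vertices even, the ordering
`0, 2, 1, 4, 3, …, 2n-2, 2n-3, 2n-1` is valid and its prefix values never exceed 2. -/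

theorem List.foldr_max_le_iff {α : Type*} [LinearOrder α] {l : List α} {a K : α} :
    l.foldr max a ≤ K ↔ a ≤ K ∧ ∀ x ∈ l, x ≤ K := by
  induction l with
  | nil => simp
  | cons b l ih => simp only [List.foldr_cons, max_le_iff, ih, List.forall_mem_cons]; tauto

theorem List.exists_eq_map_range_of_prefix {α : Type*} {e : ℕ → α} {N : ℕ} {p : List α}
    (hp : p <+: (List.range N).map e) : ∃ k ≤ N, p = (List.range k).map e := by
  refine ⟨min p.length N, min_le_right _ _, ?_⟩
  calc p = ((List.range N).map e).take p.length := List.prefix_iff_eq_take.1 hp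
    _ = (List.range (min p.length N)).map e := by rw [← List.map_take, List.take_range]

theorem Nat.add_one_mod_eq_ite {x N : ℕ} (hx : x < N) :
    (x + 1) % N = if x + 1 = N then 0 else x + 1 := by
  split_ifs with h
  · rw [h, Nat.mod_self]
  · exact Nat.mod_eq_of_lt (by omega)

section Budget

variable {adj : V → V → Prop} {bought : V → Prop} {A : Finset V} {N : ℕ} {e : ℕ → V}

theorem validOrderOn_map_range (he : Set.BijOn e (Set.Iio N) A)
    (hrank : ∀ i < N, ∀ j < N, bought (e i) → ¬ bought (e j) → adj (e i) (e j) → i < j) :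
    ValidOrderOn adj bought A ((List.range N).map e) := by
  refine ⟨List.nodup_range.map_on fun i hi j hj =>
      he.injOn (by simpa using hi) (by simpa using hj),
    fun v => ?_, fun p hp s hs hsold b hbA hb hbs => ?_⟩
  · simp only [List.mem_map, List.mem_range]
    exact ⟨fun ⟨i, hi, hiv⟩ => hiv ▸ he.mapsTo hi, fun hv => he.surjOn hv⟩
  · obtain ⟨k, hkN, rfl⟩ := List.exists_eq_map_range_of_prefix hp
    obtain ⟨j, hj, rfl⟩ := List.mem_map.1 hs
    obtain ⟨i, hi, rfl⟩ := he.surjOn hbA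
    rw [List.mem_range] at hj
    have hij : i < j := hrank i hi j (by omega) hb hsold hbs
    exact List.mem_map.2 ⟨i, List.mem_range.2 (hij.trans hj), rfl⟩

variable [DecidablePred bought]

theorem prefixVal_append (p q : List V) :
    prefixVal bought (p ++ q) = prefixVal bought p + prefixVal bought q := by
  simp only [prefixVal, List.countP_append]
  push_cast
  ring

theorem prefixVal_singleton (v : V) :
    prefixVal bought [v] = if bought v then 1 else -1 := by
  by_cases h : bought v <;> simp [prefixVal, h]

theorem prefixVal_eq_length {p : List V} (hp : ∀ v ∈ p, bought v) :
    prefixVal bought p = p.length := by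
  rw [prefixVal, List.countP_eq_length.2 (by simpa using hp),
    List.countP_eq_zero.2 (by simpa using hp)]
  simp

theorem budgetOf_le_iff {l : List V} {K : ℤ} :
    budgetOf bought l ≤ K ↔ 0 ≤ K ∧ ∀ p, p <+: l → prefixVal bought p ≤ K := by
  simp [budgetOf, List.foldr_max_le_iff, List.mem_inits]

theorem prefixVal_le_budgetOf {p l : List V} (hp : p <+: l) :
    prefixVal bought p ≤ budgetOf bought l :=
  (budgetOf_le_iff.1 le_rfl).2 p hp

theorem bgOn_eq_of_forall_le {K : ℤ}
    (hK : ∃ l, ValidOrderOn adj bought A l ∧ budgetOf bought l ≤ K)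
    (h : ∀ l, ValidOrderOn adj bought A l → K ≤ budgetOf bought l) :
    bgOn adj bought A = K := by
  have hlow :
      K ∈ lowerBounds {K | ∃ l, ValidOrderOn adj bought A l ∧ budgetOf bought l ≤ K} := by
    rintro K' ⟨l, hl, hK'⟩
    exact (h l hl).trans hK'
  exact le_antisymm (csInf_le ⟨K, hlow⟩ hK) (le_csInf ⟨K, hK⟩ hlow)

theorem le_budgetOf_of_validOrderOn [DecidableRel adj] {l : List V} {k : ℕ}
    (hl : ValidOrderOn adj bought A l) (hA : ∃ s ∈ A, ¬ bought s)
    (hk : ∀ s ∈ A, ¬ bought s → k ≤ #{b ∈ A | bought b ∧ adj b s}) :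
    (k : ℤ) ≤ budgetOf bought l := by
  classical
  obtain ⟨-, hmem, hpre⟩ := hl
  obtain ⟨s₀, hs₀A, hs₀⟩ := hA
  obtain ⟨s, hs⟩ : ∃ s, l.find? (fun v => ¬ bought v) = some s :=
    Option.isSome_iff_exists.1 (List.find?_isSome.2 ⟨s₀, (hmem s₀).2 hs₀A, by simpa⟩)
  obtain ⟨hsold, p, q, rfl, hp⟩ := List.find?_eq_some_iff_append.1 hs
  replace hsold : ¬ bought s := by simpa using hsold
  replace hp : ∀ v ∈ p, bought v := by simpa using hp
  have hnbrs : {b ∈ A | bought b ∧ adj b s} ⊆ p.toFinset := by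
    intro b hbmem
    obtain ⟨hbA, hb, hbs⟩ := Finset.mem_filter.1 hbmem
    have hps : p ++ [s] <+: p ++ s :: q := by simp
    have := hpre _ hps s (by simp) hsold b hbA hb hbs
    simp only [List.mem_append, List.mem_singleton] at this
    exact List.mem_toFinset.2 (this.resolve_right fun hbs => hsold (hbs ▸ hb))
  calc (k : ℤ) ≤ (p.toFinset.card : ℤ) := by
        exact_mod_cast (hk s ((hmem s).1 (by simp)) hsold).trans (Finset.card_le_card hnbrs)
    _ ≤ p.length := by exact_mod_cast List.toFinset_card_le p
    _ = prefixVal bought p := (prefixVal_eq_length hp).symm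
    _ ≤ budgetOf bought (p ++ s :: q) := prefixVal_le_budgetOf (List.prefix_append _ _)

theorem budgetOf_map_range_le {K : ℤ} (hK : 0 ≤ K)
    (h : ∀ k ≤ N, prefixVal bought ((List.range k).map e) ≤ K) :
    budgetOf bought ((List.range N).map e) ≤ K := by
  refine budgetOf_le_iff.2 ⟨hK, fun p hp => ?_⟩
  obtain ⟨k, hkN, rfl⟩ := List.exists_eq_map_range_of_prefix hp
  exact h k hkN

end Budget

section Cycle

/-- Position `i` of the ordering holds cycle vertex `cycleOrder n i`. -/
def cycleOrder (n i : ℕ) : ℕ :=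
  if i = 0 ∨ i = 2 * n - 1 then i else if i % 2 = 0 then i - 1 else i + 1

variable {n : ℕ}

theorem cycleOrder_lt {i : ℕ} (hi : i < 2 * n) : cycleOrder n i < 2 * n := by
  unfold cycleOrder
  split_ifs <;> omega

theorem cycleOrder_cycleOrder {i : ℕ} (hi : i < 2 * n) : cycleOrder n (cycleOrder n i) = i := by
  unfold cycleOrder
  grind

theorem lt_of_cycleOrder_adj {i j : ℕ} (hi : i < 2 * n) (hj : j < 2 * n)
    (heven : cycleOrder n i % 2 = 0) (hodd : cycleOrder n j % 2 = 1)
    (hadj : (cycleOrder n i + 1) % (2 * n) = cycleOrder n j ∨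
      (cycleOrder n j + 1) % (2 * n) = cycleOrder n i) : i < j := by
  rw [Nat.add_one_mod_eq_ite (cycleOrder_lt hi), Nat.add_one_mod_eq_ite (cycleOrder_lt hj)] at hadj
  unfold cycleOrder at *
  split_ifs at * <;> omega

variable (f : V ≃ Fin (2 * n)) {adj : V → V → Prop} {bought : V → Prop}

theorem two_le_card_bought_adj_of_cycle [Fintype V] [DecidablePred bought] [DecidableRel adj]
    (hn : 2 ≤ n)
    (hadj : ∀ v w, adj v w ↔
      (((f v : ℕ) + 1) % (2 * n) = (f w : ℕ) ∨ ((f w : ℕ) + 1) % (2 * n) = (f v : ℕ)))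
    (hbought : ∀ v, bought v ↔ (f v : ℕ) % 2 = 0) {s : V} (hs : ¬ bought s) :
    2 ≤ #{b ∈ Finset.univ | bought b ∧ adj b s} := by
  have hlt := (f s).isLt
  rw [hbought] at hs
  have hsucc := Nat.add_one_mod_eq_ite hlt
  refine Finset.one_lt_card.2 ⟨f.symm ⟨(f s : ℕ) - 1, by omega⟩, ?_,
    f.symm ⟨((f s : ℕ) + 1) % (2 * n), Nat.mod_lt _ (by omega)⟩, ?_, ?_⟩
  · simp only [Finset.mem_filter, Finset.mem_univ, true_and, hbought, hadj,
      Equiv.apply_symm_apply]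
    refine ⟨by omega, Or.inl ?_⟩
    rw [Nat.sub_add_cancel (by omega), Nat.mod_eq_of_lt hlt]
  · simp only [Finset.mem_filter, Finset.mem_univ, true_and, hbought, hadj,
      Equiv.apply_symm_apply]
    refine ⟨?_, Or.inr trivial⟩
    rw [hsucc]
    split_ifs <;> omega
  · simp only [ne_eq, EmbeddingLike.apply_eq_iff_eq, Fin.mk.injEq, hsucc]
    split_ifs <;> omega

variable [NeZero n]

def cycleVertex (i : ℕ) : V := f.symm (Fin.ofNat (2 * n) (cycleOrder n i))

theorem val_cycleVertex {i : ℕ} (hi : i < 2 * n) :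
    (f (cycleVertex f i) : ℕ) = cycleOrder n i := by
  simp [cycleVertex, Nat.mod_eq_of_lt (cycleOrder_lt hi)]

theorem bijOn_cycleVertex : Set.BijOn (cycleVertex f) (Set.Iio (2 * n)) Set.univ := by
  refine ⟨fun _ _ => Set.mem_univ _, fun i hi j hj hij => ?_, fun v _ => ?_⟩
  · have := congrArg (fun v => (f v : ℕ)) hij
    simp only [val_cycleVertex f hi, val_cycleVertex f hj] at this
    rw [← cycleOrder_cycleOrder hi, this, cycleOrder_cycleOrder hj]
  · have hv := (f v).isLt
    refine ⟨cycleOrder n (f v), cycleOrder_lt hv, f.injective (Fin.ext ?_)⟩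
    rw [val_cycleVertex f (cycleOrder_lt hv), cycleOrder_cycleOrder hv]

theorem validOrderOn_cycleVertex [Fintype V]
    (hadj : ∀ v w, adj v w ↔
      (((f v : ℕ) + 1) % (2 * n) = (f w : ℕ) ∨ ((f w : ℕ) + 1) % (2 * n) = (f v : ℕ)))
    (hbought : ∀ v, bought v ↔ (f v : ℕ) % 2 = 0) :
    ValidOrderOn adj bought Finset.univ ((List.range (2 * n)).map (cycleVertex f)) := by
  refine validOrderOn_map_range (by simpa using bijOn_cycleVertex f)
    fun i hi j hj hbi hsj hij => lt_of_cycleOrder_adj hi hj ?_ ?_ ?_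
  · rwa [hbought, val_cycleVertex f hi] at hbi
  · rw [hbought, val_cycleVertex f hj] at hsj
    omega
  · rwa [hadj, val_cycleVertex f hi, val_cycleVertex f hj] at hij

variable [DecidablePred bought]

-- The prefix values run `0, 1, 2, 1, 2, …, 1, 2, 1, 0`.
theorem prefixVal_map_cycleVertex_le (hbought : ∀ v, bought v ↔ (f v : ℕ) % 2 = 0) {k : ℕ}
    (hk : k ≤ 2 * n) :
    prefixVal bought ((List.range k).map (cycleVertex f)) ≤ k ∧
      prefixVal bought ((List.range k).map (cycleVertex f)) + k % 2 ≤ 2 := by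
  induction k with
  | zero => simp [prefixVal]
  | succ k ih =>
    have hkn : k < 2 * n := by omega
    obtain ⟨ih₁, ih₂⟩ := ih hkn.le
    rw [List.range_succ, List.map_append, prefixVal_append, List.map_singleton,
      prefixVal_singleton]
    simp only [hbought, val_cycleVertex f hkn, cycleOrder]
    split_ifs <;> omega

theorem budgetOf_map_cycleVertex_le (hbought : ∀ v, bought v ↔ (f v : ℕ) % 2 = 0) :
    budgetOf bought ((List.range (2 * n)).map (cycleVertex f)) ≤ 2 :=
  budgetOf_map_range_le (by norm_num) fun _ hk => by
    have := prefixVal_map_cycleVertex_le f hbought hk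
    omega

end Cycle

theorem cycle_budget_general {V : Type*} [Fintype V]
    (G : SimpleGraph V) (bought : V → Prop) [DecidablePred bought]
    (hcycle : ∃ (n : ℕ) (f : V ≃ Fin (2 * n)), 2 ≤ n ∧
      (∀ v w, G.Adj v w ↔
        (((f v : ℕ) + 1) % (2 * n) = (f w : ℕ) ∨ ((f w : ℕ) + 1) % (2 * n) = (f v : ℕ))) ∧
      (∀ v, bought v ↔ (f v : ℕ) % 2 = 0)) :
    bg G.Adj bought = 2 := by
  classical
  obtain ⟨n, f, hn, hadj, hbought⟩ := hcycle
  have : NeZero n := ⟨by omega⟩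
  refine bgOn_eq_of_forall_le ⟨_, validOrderOn_cycleVertex f hadj hbought,
    budgetOf_map_cycleVertex_le f hbought⟩ fun l hl => ?_
  have hsold : ∃ s ∈ Finset.univ, ¬ bought s :=
    ⟨f.symm ⟨1, by omega⟩, Finset.mem_univ _, by simp [hbought]⟩
  exact_mod_cast le_budgetOf_of_validOrderOn hl hsold
    fun s _ hs => two_le_card_bought_adj_of_cycle f hn hadj hbought hs

/-- if the underlying graph is a simple even cycle on at least 4 vertices,
alternating between bought and sold vertices, then `bg(H) = 2`. -/
theorem cycle_budget {V : Type*} [Fintype V] [DecidableEq V]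
    (G : SimpleGraph V) (bought : V → Prop) [DecidablePred bought]
    (hcycle : ∃ (n : ℕ) (f : V ≃ Fin (2 * n)), 2 ≤ n ∧
      (∀ v w, G.Adj v w ↔
        (((f v : ℕ) + 1) % (2 * n) = (f w : ℕ) ∨ ((f w : ℕ) + 1) % (2 * n) = (f v : ℕ))) ∧
      (∀ v, bought v ↔ (f v : ℕ) % 2 = 0)) :
    bg G.Adj bought = 2 :=
  cycle_budget_general G bought hcycle
end
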